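/- For all nonnegative integers m and n, sum_{j=0}^{2n} (-1)^j q^{mj} (2n choose j)_q = (q;q^2)_n * sum_{k=0}^{floor(m/2)} q^{2k(2k-1)/2} (m choose 2k)_q (q^{2n-2k+2}; q^2)_k. In particular, (q;q^2)_n divides r_{2n}(-q^m, q) in Z[q]. -/

import Mathlib

/-!
With the Rogers–Szegő polynomial `r_N(x) = ∑_j [N, j]_q x^j`, the two `q`-Pascal rules give
`r_{N+1}(x) = r_N(qx) + x r_N(x)` and `r_{N+1}(qx) = r_N(qx) + q^{N+1} x r_N(x)`. Eliminating
`r_{N+1}` and putting `x = -q^m` gives a three-term recurrence in `m` for the left-hand side,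
`L(m+2) = (1 + q^{m+1}) L(m+1) - q^{N+1+m} L(m)`. For `N = 2n` the sum on the right satisfies
the same recurrence: after applying the Pascal rules, the defect of its `k`-th summand is
`d_{k-1} - d_k` for explicit `d_k`, so the defects telescope. Both sides agree at `m = 0, 1`,
where the same two recurrences at `x = -1` give `r_{2n}(-1) = r_{2n}(-q) = (q; q^2)_n`.
-/

open Finset

/-- Gaussian (q-)binomial coefficient, defined over any commutative ring by the
Pascal-type recurrence `[n+1, k+1] = [n, k] + q^(k+1) * [n, k+1]`. -/
def qbinom {R : Type*} [CommRing R] (q : R) : ℕ → ℕ → R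
  | _, 0 => 1
  | 0, _ + 1 => 0
  | n + 1, k + 1 => qbinom q n k + q ^ (k + 1) * qbinom q n (k + 1)

section QBinom

variable {R : Type*} [CommRing R] (q : R)

@[simp]
lemma qbinom_zero_right (n : ℕ) : qbinom q n 0 = 1 := by cases n <;> rfl

lemma qbinom_succ_succ (n k : ℕ) :
    qbinom q (n + 1) (k + 1) = qbinom q n k + q ^ (k + 1) * qbinom q n (k + 1) := rfl

lemma qbinom_eq_zero_of_lt : ∀ {n k : ℕ}, n < k → qbinom q n k = 0
  | 0, _ + 1, _ => rfl
  | n + 1, k + 1, h => by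
    rw [qbinom_succ_succ, qbinom_eq_zero_of_lt (by omega), qbinom_eq_zero_of_lt (by omega),
      mul_zero, add_zero]

/-- The truncated exponent `n - k` is harmless: `qbinom q n k = 0` for `n < k`. -/
lemma qbinom_succ_succ' : ∀ n k : ℕ,
    qbinom q (n + 1) (k + 1) = q ^ (n - k) * qbinom q n k + qbinom q n (k + 1)
  | 0, 0 => by simp [qbinom]
  | 0, k + 1 => by simp [qbinom]
  | n + 1, 0 => by
    have ih : qbinom q (n + 1) 1 = q ^ n + qbinom q n 1 := by simpa using qbinom_succ_succ' n 0
    have h : qbinom q (n + 1) 1 = 1 + q * qbinom q n 1 := by simpa using qbinom_succ_succ q n 0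
    rw [qbinom_succ_succ, qbinom_zero_right, Nat.sub_zero, mul_one]
    linear_combination q * ih - h
  | n + 1, k + 1 => by
    have ih₁ := qbinom_succ_succ' n k
    have ih₂ := qbinom_succ_succ' n (k + 1)
    have h₁ := qbinom_succ_succ q n k
    have h₂ := qbinom_succ_succ q n (k + 1)
    rw [qbinom_succ_succ q (n + 1) (k + 1), Nat.add_sub_add_right]
    rcases lt_or_ge k n with hkn | hkn
    · obtain ⟨d, rfl⟩ : ∃ d, n = k + 1 + d := ⟨n - (k + 1), by omega⟩
      rw [show k + 1 + d - (k + 1) = d by omega] at ih₂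
      rw [show k + 1 + d - k = d + 1 by omega] at ih₁ ⊢
      linear_combination ih₁ + q ^ (k + 1 + 1) * ih₂ - q ^ (d + 1) * h₁ - h₂
    · rw [qbinom_eq_zero_of_lt q (show n < k + 1 by omega)] at ih₁ ih₂ h₁ h₂
      linear_combination ih₁ + q ^ (k + 1 + 1) * ih₂ - q ^ (n - k) * h₁ - h₂

end QBinom

section QPochhammer

variable {R : Type*} [CommRing R]

def qPochhammer (a p : R) (k : ℕ) : R := ∏ i ∈ range k, (1 - a * p ^ i)

@[simp]
lemma qPochhammer_zero (a p : R) : qPochhammer a p 0 = 1 := prod_range_zero _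

lemma qPochhammer_succ' (a p : R) (k : ℕ) :
    qPochhammer a p (k + 1) = (1 - a) * qPochhammer (a * p) p k := by
  simp only [qPochhammer, prod_range_succ', pow_succ', pow_zero, mul_one, mul_assoc, mul_comm]

lemma qPochhammer_one_left (p : R) (k : ℕ) : qPochhammer 1 p (k + 1) = 0 := by
  rw [qPochhammer_succ', sub_self, zero_mul]

lemma qPochhammer_pow_pow (q : R) (a b k : ℕ) :
    qPochhammer (q ^ a) (q ^ b) k = ∏ i ∈ range k, (1 - q ^ (a + b * i)) := by
  simp only [qPochhammer, ← pow_mul, ← pow_add]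

lemma mul_qPochhammer_sq_succ (q : R) (n k : ℕ) :
    q ^ (2 * k) * qPochhammer (q ^ (2 * (n - k))) (q ^ 2) (k + 1) =
      (q ^ (2 * k) - q ^ (2 * n)) * qPochhammer (q ^ (2 * (n + 1 - k))) (q ^ 2) k := by
  rcases le_or_gt k n with hkn | hkn
  · rw [qPochhammer_succ', ← pow_add, show 2 * (n - k) + 2 = 2 * (n + 1 - k) by omega]
    have hpow : q ^ (2 * k) * q ^ (2 * (n - k)) = q ^ (2 * n) := by
      rw [← pow_add]; congr 1; omega
    linear_combination -qPochhammer (q ^ (2 * (n + 1 - k))) (q ^ 2) k * hpow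
  · obtain ⟨j, rfl⟩ : ∃ j, k = j + 1 := ⟨k - 1, by omega⟩
    rw [show 2 * (n - (j + 1)) = 0 by omega, show 2 * (n + 1 - (j + 1)) = 0 by omega, pow_zero,
      qPochhammer_one_left, qPochhammer_one_left, mul_zero, mul_zero]

end QPochhammer

section RogersSzego

variable {R : Type*} [CommRing R]

def rogersSzego (q : R) (N : ℕ) (x : R) : R := ∑ j ∈ range (N + 1), qbinom q N j * x ^ j

variable (q : R)

lemma rogersSzego_eq_sum_range {N r : ℕ} (h : N < r) (x : R) :
    rogersSzego q N x = ∑ j ∈ range r, qbinom q N j * x ^ j := by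
  refine sum_subset (range_subset_range.mpr h) fun j _ hj => ?_
  rw [qbinom_eq_zero_of_lt q (by simpa using hj), zero_mul]

lemma rogersSzego_neg_pow (N m : ℕ) :
    rogersSzego q N (-q ^ m) = ∑ j ∈ range (N + 1), (-1) ^ j * q ^ (m * j) * qbinom q N j := by
  refine sum_congr rfl fun j _ => ?_
  rw [neg_eq_neg_one_mul, mul_pow, ← pow_mul]
  ring

lemma rogersSzego_succ (N : ℕ) (x : R) :
    rogersSzego q (N + 1) x = rogersSzego q N (q * x) + x * rogersSzego q N x := by
  have hterm : ∀ j, qbinom q (N + 1) (j + 1) * x ^ (j + 1) =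
      qbinom q N (j + 1) * (q * x) ^ (j + 1) + x * (qbinom q N j * x ^ j) := fun j => by
    rw [qbinom_succ_succ]; ring
  rw [rogersSzego, rogersSzego_eq_sum_range q (by omega : N < N + 2), rogersSzego, sum_range_succ',
    sum_range_succ' (fun j => qbinom q N j * (q * x) ^ j), mul_sum]
  simp only [hterm, sum_add_distrib, qbinom_zero_right]
  ring

lemma rogersSzego_succ_mul (N : ℕ) (x : R) :
    rogersSzego q (N + 1) (q * x) =
      rogersSzego q N (q * x) + q ^ (N + 1) * x * rogersSzego q N x := by
  have hterm : ∀ j ∈ range (N + 1), qbinom q (N + 1) (j + 1) * (q * x) ^ (j + 1) =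
      qbinom q N (j + 1) * (q * x) ^ (j + 1) + q ^ (N + 1) * x * (qbinom q N j * x ^ j) :=
    fun j hj => by
      obtain ⟨d, rfl⟩ : ∃ d, N = j + d := ⟨N - j, by have := mem_range.mp hj; omega⟩
      rw [qbinom_succ_succ', Nat.add_sub_cancel_left]; ring
  rw [rogersSzego, rogersSzego_eq_sum_range q (by omega : N < N + 2), rogersSzego, sum_range_succ',
    sum_range_succ' (fun j => qbinom q N j * (q * x) ^ j), mul_sum, sum_congr rfl hterm]
  simp only [sum_add_distrib, qbinom_zero_right]
  ring

lemma rogersSzego_sq_mul (N : ℕ) (x : R) :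
    rogersSzego q N (q ^ 2 * x) =
      (1 - q * x) * rogersSzego q N (q * x) + q ^ (N + 1) * x * rogersSzego q N x := by
  have h₁ := rogersSzego_succ q N (q * x)
  have h₂ := rogersSzego_succ_mul q N x
  rw [← mul_assoc, ← sq] at h₁
  linear_combination h₂ - h₁

lemma rogersSzego_two_mul_neg_one (n : ℕ) :
    rogersSzego q (2 * n) (-1) = qPochhammer q (q ^ 2) n ∧
      rogersSzego q (2 * n) (-q) = qPochhammer q (q ^ 2) n := by
  induction n with
  | zero => simp [rogersSzego, qPochhammer]
  | succ n ih =>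
    have a₁ := rogersSzego_succ q (2 * n) (-1)
    have b₁ := rogersSzego_succ_mul q (2 * n) (-1)
    have a₂ := rogersSzego_succ q (2 * n + 1) (-1)
    have b₂ := rogersSzego_succ_mul q (2 * n + 1) (-1)
    rw [mul_neg_one] at a₁ b₁ a₂ b₂
    rw [ih.1, ih.2] at a₁ b₁
    have hP : qPochhammer q (q ^ 2) (n + 1) = (1 - q ^ (2 * n + 1)) * qPochhammer q (q ^ 2) n := by
      rw [qPochhammer, prod_range_succ, ← qPochhammer, ← pow_mul, ← pow_succ']; ring
    rw [hP, show 2 * (n + 1) = 2 * n + 1 + 1 by ring]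
    constructor
    · linear_combination a₂ + b₁ - a₁
    · linear_combination b₂ + b₁ - q ^ (2 * n + 1 + 1) * a₁

end RogersSzego

lemma Nat.succ_choose_two (j : ℕ) : (j + 1).choose 2 = j.choose 2 + j := by
  rw [Nat.choose_succ_succ, Nat.choose_one_right, add_comm]

section EvenBinomialSum

variable {R : Type*} [CommRing R] (q : R) (n : ℕ)

def evenTerm (m k : ℕ) : R :=
  q ^ (2 * k).choose 2 * qbinom q m (2 * k) * qPochhammer (q ^ (2 * (n + 1 - k))) (q ^ 2) k

def evenBinomialSum (m : ℕ) : R := ∑ k ∈ range (m / 2 + 1), evenTerm q n m k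

lemma sum_range_evenTerm_of_lt {m r : ℕ} (h : m / 2 < r) :
    ∑ k ∈ range r, evenTerm q n m k = evenBinomialSum q n m := by
  refine (sum_subset (range_subset_range.mpr h) fun k hk hk' => ?_).symm
  simp only [mem_range] at hk hk'
  rw [evenTerm, qbinom_eq_zero_of_lt q (by omega), mul_zero, zero_mul]

def evenTermDefect (m k : ℕ) : R :=
  q ^ (m + 1 + (2 * k + 1).choose 2) * qbinom q m (2 * k) *
    qPochhammer (q ^ (2 * (n - k))) (q ^ 2) (k + 1)

lemma evenTerm_recurrence_zero (m : ℕ) :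
    evenTerm q n (m + 2) 0 - (1 + q ^ (m + 1)) * evenTerm q n (m + 1) 0 +
      q ^ (2 * n + 1 + m) * evenTerm q n m 0 = -evenTermDefect q n m 0 := by
  simp only [evenTerm, evenTermDefect, qPochhammer_succ', qPochhammer_zero, qbinom_zero_right,
    Nat.choose_zero_succ, Nat.choose_succ_self, mul_zero, pow_zero, mul_one, tsub_zero, add_zero]
  ring

lemma evenTerm_recurrence_succ (m k : ℕ) :
    evenTerm q n (m + 2) (k + 1) - (1 + q ^ (m + 1)) * evenTerm q n (m + 1) (k + 1) +
      q ^ (2 * n + 1 + m) * evenTerm q n m (k + 1) =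
        evenTermDefect q n m k - evenTermDefect q n m (k + 1) := by
  have hc₁ : (2 * k + 1).choose 2 = (2 * k).choose 2 + 2 * k := Nat.succ_choose_two _
  have hc₂ : (2 * (k + 1)).choose 2 = (2 * k).choose 2 + 4 * k + 1 := by
    rw [show 2 * (k + 1) = 2 * k + 1 + 1 by ring, Nat.succ_choose_two, hc₁]; ring
  have hc₃ : (2 * (k + 1) + 1).choose 2 = (2 * k).choose 2 + 6 * k + 3 := by
    rw [Nat.succ_choose_two, hc₂]; ring
  have hP := mul_qPochhammer_sq_succ q n (k + 1)
  simp only [evenTerm, evenTermDefect, Nat.add_sub_add_right, hc₁, hc₂, hc₃] at hP ⊢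
  rcases le_or_gt (2 * k) m with hkm | hkm
  · obtain ⟨d, rfl⟩ : ∃ d, m = 2 * k + d := ⟨m - 2 * k, by omega⟩
    have h₁ := qbinom_succ_succ' q (2 * k + d + 1) (2 * k + 1)
    have h₂ := qbinom_succ_succ q (2 * k + d) (2 * k)
    have h₃ := qbinom_succ_succ q (2 * k + d) (2 * k + 1)
    rw [show 2 * k + d + 1 - (2 * k + 1) = d by omega] at h₁
    rw [show 2 * (k + 1) = 2 * k + 1 + 1 by ring, show 2 * k + d + 2 = 2 * k + d + 1 + 1 by ring]
    -- Pascal rules: the left side is `e (q^d [m,2k] - q^(m+1) (q^(2k+2) - q^(2n)) [m,2k+2])`.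
    set e := q ^ ((2 * k).choose 2 + 4 * k + 1) * qPochhammer (q ^ (2 * (n - k))) (q ^ 2) (k + 1)
    linear_combination e * h₁ + e * q ^ d * h₂ - e * q ^ (2 * k + d + 1) * h₃ +
      q ^ (2 * k + d + 1 + (2 * k).choose 2 + 4 * k + 1) * qbinom q (2 * k + d) (2 * k + 1 + 1) * hP
  · simp [qbinom_eq_zero_of_lt q (show m < 2 * k by omega),
      qbinom_eq_zero_of_lt q (show m + 1 < 2 * (k + 1) by omega),
      qbinom_eq_zero_of_lt q (show m + 2 < 2 * (k + 1) by omega),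
      qbinom_eq_zero_of_lt q (show m < 2 * (k + 1) by omega)]

lemma sum_range_evenTerm_recurrence (m r : ℕ) :
    ∑ k ∈ range (r + 1), (evenTerm q n (m + 2) k - (1 + q ^ (m + 1)) * evenTerm q n (m + 1) k +
      q ^ (2 * n + 1 + m) * evenTerm q n m k) = -evenTermDefect q n m r := by
  induction r with
  | zero => rw [sum_range_one, evenTerm_recurrence_zero]
  | succ r ih => rw [sum_range_succ, ih, evenTerm_recurrence_succ]; ring

lemma evenBinomialSum_recurrence (m : ℕ) :
    evenBinomialSum q n (m + 2) =
      (1 + q ^ (m + 1)) * evenBinomialSum q n (m + 1) -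
        q ^ (2 * n + 1 + m) * evenBinomialSum q n m := by
  have h := sum_range_evenTerm_recurrence q n m (m / 2 + 1)
  rw [sum_add_distrib, sum_sub_distrib, ← mul_sum, ← mul_sum,
    sum_range_evenTerm_of_lt q n (by omega : (m + 2) / 2 < m / 2 + 1 + 1),
    sum_range_evenTerm_of_lt q n (by omega : (m + 1) / 2 < m / 2 + 1 + 1),
    sum_range_evenTerm_of_lt q n (by omega : m / 2 < m / 2 + 1 + 1), evenTermDefect,
    qbinom_eq_zero_of_lt q (by omega : m < 2 * (m / 2 + 1))] at h
  linear_combination h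

lemma evenBinomialSum_zero : evenBinomialSum q n 0 = 1 := by
  simp [evenBinomialSum, evenTerm]

lemma evenBinomialSum_one : evenBinomialSum q n 1 = 1 := by
  simp [evenBinomialSum, evenTerm]

lemma rogersSzego_two_mul_neg_pow (m : ℕ) :
    rogersSzego q (2 * n) (-q ^ m) = qPochhammer q (q ^ 2) n * evenBinomialSum q n m := by
  induction m using Nat.twoStepInduction with
  | zero => rw [pow_zero, (rogersSzego_two_mul_neg_one q n).1, evenBinomialSum_zero, mul_one]
  | one => rw [pow_one, (rogersSzego_two_mul_neg_one q n).2, evenBinomialSum_one, mul_one]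
  | more m ih₀ ih₁ =>
    have h := rogersSzego_sq_mul q (2 * n) (-q ^ m)
    rw [mul_neg, ← pow_add, add_comm 2 m, mul_neg, ← pow_succ'] at h
    rw [h, ih₀, ih₁, evenBinomialSum_recurrence]
    ring

end EvenBinomialSum

open Polynomial in
theorem stmt17 (m n : ℕ) :
    (∑ j ∈ Finset.range (2 * n + 1), (-1 : ℤ[X]) ^ j * X ^ (m * j) * qbinom (X : ℤ[X]) (2 * n) j =
      (∏ i ∈ Finset.range n, (1 - (X : ℤ[X]) ^ (2 * i + 1))) *
        ∑ k ∈ Finset.range (m / 2 + 1),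
          X ^ (2 * k * (2 * k - 1) / 2) * qbinom (X : ℤ[X]) m (2 * k) *
            ∏ i ∈ Finset.range k, (1 - (X : ℤ[X]) ^ (2 * (n + 1 - k) + 2 * i))) ∧
    (∏ i ∈ Finset.range n, (1 - (X : ℤ[X]) ^ (2 * i + 1))) ∣
      ∑ j ∈ Finset.range (2 * n + 1), (-1 : ℤ[X]) ^ j * X ^ (m * j) * qbinom (X : ℤ[X]) (2 * n) j := by
  have hodd : ∏ i ∈ range n, (1 - (X : ℤ[X]) ^ (2 * i + 1)) = qPochhammer X (X ^ 2) n := by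
    simpa [add_comm] using (qPochhammer_pow_pow (X : ℤ[X]) 1 2 n).symm
  have hsum : ∑ k ∈ range (m / 2 + 1), X ^ (2 * k * (2 * k - 1) / 2) * qbinom (X : ℤ[X]) m (2 * k) *
      ∏ i ∈ range k, (1 - (X : ℤ[X]) ^ (2 * (n + 1 - k) + 2 * i)) = evenBinomialSum X n m := by
    simp only [evenBinomialSum, evenTerm, Nat.choose_two_right, qPochhammer_pow_pow]
  rw [← rogersSzego_neg_pow, hodd, hsum, rogersSzego_two_mul_neg_pow]
  exact ⟨rfl, dvd_mul_right _ _⟩
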